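/- For f(z) = c·e^{πz} + (1/c)·e^{-π·conj(z)} with c > 0, writing h(z) = c·e^{πz}, g(z) = (1/c)·e^{-πz}, and σ(z) = log(|h'(z)| + |g'(z)|), the Schwarzian derivative of the harmonic mapping satisfies Sf(z) = -π²/2 + 4π⁴·e^{-2σ(z)} for all z = x + iy, where e^{σ(z)} = π(c·e^{πx} + (1/c)e^{-πx}). -/

import Mathlib

/-!
For `h = a e^{bz}` and `q = γ e^{-bz}` everything is explicit: `Sh = -b²/2`, `h''/h' = b`,
`q' = -bq` and `q'' = b²q`, so the correction terms of the harmonic Schwarzian collapse to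
`4b²|q|²/(1 + |q|²)²`. For the catenoid, `r = |q| = e^{-πx}/c` and `|h'| = π/r`, so
`e^σ = π(r⁻¹ + r) = π(1 + r²)/r`, which turns that term into `4π⁴e^{-2σ}`.
-/

noncomputable def schwarzian (f : ℂ → ℂ) (z : ℂ) : ℂ :=
  deriv (fun w => deriv (deriv f) w / deriv f w) z
    - (1/2) * (deriv (deriv f) z / deriv f z)^2

open Complex ComplexConjugate

/-- The Schwarzian of `f = h + conj g` with dilatation `g'/h' = q²`. -/
noncomputable def harmonicSchwarzian (h q : ℂ → ℂ) (z : ℂ) : ℂ :=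
  schwarzian h z
    + 2 * conj (q z) / (1 + ‖q z‖ ^ 2)
        * (deriv (deriv q) z - deriv q z * deriv (deriv h) z / deriv h z)
    - 4 * (deriv q z * conj (q z) / (1 + ‖q z‖ ^ 2)) ^ 2

lemma deriv_const_mul_cexp (a b : ℂ) :
    deriv (fun w => a * cexp (b * w)) = fun z => a * b * cexp (b * z) := by
  funext z
  rw [(((hasDerivAt_id' z).const_mul b).cexp.const_mul a).deriv]
  ring

/-- For `b = 0` both sides vanish, as `0 / 0 = 0`. -/
lemma deriv_deriv_div_deriv_const_mul_cexp {a : ℂ} (ha : a ≠ 0) (b z : ℂ) :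
    a * b * b * cexp (b * z) / (a * b * cexp (b * z)) = b := by
  rcases eq_or_ne b 0 with rfl | hb
  · simp
  · field_simp

lemma schwarzian_const_mul_cexp {a : ℂ} (ha : a ≠ 0) (b z : ℂ) :
    schwarzian (fun w => a * cexp (b * w)) z = -b ^ 2 / 2 := by
  simp only [schwarzian, deriv_const_mul_cexp, deriv_deriv_div_deriv_const_mul_cexp ha, deriv_const]
  ring

lemma harmonicSchwarzian_const_mul_cexp {a : ℂ} (ha : a ≠ 0) (b γ z : ℂ) :
    harmonicSchwarzian (fun w => a * cexp (b * w)) (fun w => γ * cexp (-b * w)) z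
      = -b ^ 2 / 2 + 4 * b ^ 2 * ‖γ * cexp (-b * z)‖ ^ 2 / (1 + ‖γ * cexp (-b * z)‖ ^ 2) ^ 2 := by
  simp only [harmonicSchwarzian, schwarzian_const_mul_cexp ha, deriv_const_mul_cexp]
  rw [mul_div_assoc (γ * -b * cexp (-b * z)), deriv_deriv_div_deriv_const_mul_cexp ha,
    show γ * -b * -b * cexp (-b * z) = b ^ 2 * (γ * cexp (-b * z)) by ring,
    show γ * -b * cexp (-b * z) = -b * (γ * cexp (-b * z)) by ring]
  set q := γ * cexp (-b * z)
  have hqq : conj q * q = (‖q‖ : ℂ) ^ 2 := by rw [conj_mul']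
  have hden : (1 : ℂ) + (‖q‖ : ℂ) ^ 2 ≠ 0 := by
    exact_mod_cast (by positivity : (0 : ℝ) < 1 + ‖q‖ ^ 2).ne'
  field_simp
  linear_combination 8 * b ^ 2 * (1 - conj q * q) * hqq

lemma norm_I_div_mul_cexp {c : ℝ} (hc : 0 < c) (b : ℝ) (z : ℂ) :
    ‖I / c * cexp (b * z)‖ = 1 / c * Real.exp (b * z.re) := by
  rw [norm_mul, norm_div, norm_I, norm_real, Real.norm_of_nonneg hc.le, norm_exp]
  simp

lemma sq_div_one_add_sq_sq {r : ℝ} (hr : r ≠ 0) : r ^ 2 / (1 + r ^ 2) ^ 2 = ((r⁻¹ + r) ^ 2)⁻¹ := by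
  field_simp

lemma Real.exp_neg_two_mul_log {x : ℝ} (hx : 0 < x) : Real.exp (-2 * Real.log x) = (x ^ 2)⁻¹ := by
  rw [mul_comm, ← Real.rpow_def_of_pos hx, Real.rpow_neg hx.le]
  norm_cast

/-- For the harmonic mapping `f(z) = c e^{πz} + (1/c) e^{-π z̄}`, with
`h(z) = c e^{πz}`, `q(z) = (i/c) e^{-πz}` and conformal factor
`e^{σ} = π(c e^{πx} + (1/c) e^{-πx})`, the harmonic Schwarzian
`Sf = Sh + (2 q̄/(1+|q|²))(q'' - q'h''/h') - 4(q' q̄/(1+|q|²))²`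
equals `-π²/2 + 4π⁴ e^{-2σ}`. -/
theorem harmonic_schwarzian_catenoid (c : ℝ) (hc : 0 < c) :
    ∀ z : ℂ,
      (schwarzian (fun w => (c:ℂ) * Complex.exp ((Real.pi : ℂ) * w)) z
        + (2 * (starRingEnd ℂ) ((Complex.I / c) * Complex.exp (-(Real.pi : ℂ) * z)) /
            (1 + ‖(Complex.I / c) * Complex.exp (-(Real.pi : ℂ) * z)‖^2)) *
          (deriv (deriv (fun w => (Complex.I / c) * Complex.exp (-(Real.pi : ℂ) * w))) z
            - deriv (fun w => (Complex.I / c) * Complex.exp (-(Real.pi : ℂ) * w)) z *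
              deriv (deriv (fun w => (c:ℂ) * Complex.exp ((Real.pi : ℂ) * w))) z /
              deriv (fun w => (c:ℂ) * Complex.exp ((Real.pi : ℂ) * w)) z)
        - 4 * (deriv (fun w => (Complex.I / c) * Complex.exp (-(Real.pi : ℂ) * w)) z *
              (starRingEnd ℂ) ((Complex.I / c) * Complex.exp (-(Real.pi : ℂ) * z)) /
            (1 + ‖(Complex.I / c) * Complex.exp (-(Real.pi : ℂ) * z)‖^2))^2)
      = ((-Real.pi^2 / 2
          + 4 * Real.pi^4 *
            Real.exp (-2 * Real.log (Real.pi *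
              (c * Real.exp (Real.pi * z.re) + (1/c) * Real.exp (-Real.pi * z.re)))) : ℝ)
          : ℂ) := by
  intro z
  change harmonicSchwarzian (fun w => (c : ℂ) * cexp (Real.pi * w))
    (fun w => I / c * cexp (-Real.pi * w)) z = _
  have hcexp : c * Real.exp (Real.pi * z.re) = (1 / c * Real.exp (-Real.pi * z.re))⁻¹ := by
    rw [neg_mul, Real.exp_neg]
    field_simp
  have hr : 1 / c * Real.exp (-Real.pi * z.re) ≠ 0 := by positivity
  rw [harmonicSchwarzian_const_mul_cexp (by exact_mod_cast hc.ne'),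
    ← ofReal_neg, norm_I_div_mul_cexp hc, hcexp, Real.exp_neg_two_mul_log (by positivity), mul_pow,
    mul_inv, ← sq_div_one_add_sq_sq hr]
  push_cast
  field_simp
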